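/- arXiv:1007.4105 — 2 statements merged into one kernel-verified Lean document; each statement's English description precedes it below -/
import Mathlib

section
/- The tensor product of abstract q(n)-crystals is associative: for abstract q(n)-crystals B₁, B₂, B₃, the natural bijection (B₁ ⊗ B₂) ⊗ B₃ → B₁ ⊗ (B₂ ⊗ B₃), ((b₁,b₂),b₃) ↦ (b₁,(b₂,b₃)), commutes with the odd operators ẽ₁̄ and f̃₁̄ defined by the rule: ẽ₁̄(b₁ ⊗ b₂) = ẽ₁̄b₁ ⊗ b₂ if ⟨k₁, wt b₂⟩ = ⟨k₂, wt b₂⟩ = 0, and b₁ ⊗ ẽ₁̄b₂ otherwise (similarly for f̃₁̄). -/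
/-- The odd tensor-product operator rule: act on the first factor if the first two
coordinates of `wt b₂` vanish, otherwise act on the second factor. -/
def tensorOddOp {B₁ B₂ : Type*} {n : ℕ} (wt₂ : B₂ → Fin n → ℤ)
    (op₁ : B₁ → Option B₁) (op₂ : B₂ → Option B₂) :
    B₁ × B₂ → Option (B₁ × B₂) := fun p =>
  if (∀ i : Fin n, ((i : ℕ) = 0 ∨ (i : ℕ) = 1) → wt₂ p.2 i = 0) then
    (op₁ p.1).map (fun b => (b, p.2))
  else
    (op₂ p.2).map (fun b => (p.1, b))

/-- The weight of a tensor product: `wt(b₁ ⊗ b₂) = wt b₁ + wt b₂`. -/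
def tensorWt {B₁ B₂ : Type*} {n : ℕ} (wt₁ : B₁ → Fin n → ℤ) (wt₂ : B₂ → Fin n → ℤ) :
    B₁ × B₂ → Fin n → ℤ := fun p i => wt₁ p.1 i + wt₂ p.2 i


lemma tensorOddOp_assoc_aux {n : ℕ} {B₁ B₂ B₃ : Type*}
    (wt₂ : B₂ → Fin n → ℤ) (wt₃ : B₃ → Fin n → ℤ)
    (hwt₂ : ∀ b i, 0 ≤ wt₂ b i) (hwt₃ : ∀ b i, 0 ≤ wt₃ b i)
    (op₁ : B₁ → Option B₁) (op₂ : B₂ → Option B₂) (op₃ : B₃ → Option B₃)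
    (p : (B₁ × B₂) × B₃) :
    ((tensorOddOp wt₃ (tensorOddOp wt₂ op₁ op₂) op₃ p).map
        (fun r => (r.1.1, (r.1.2, r.2)))
      = tensorOddOp (tensorWt wt₂ wt₃) op₁ (tensorOddOp wt₃ op₂ op₃)
          (p.1.1, (p.1.2, p.2))) := by
  obtain ⟨⟨b₁, b₂⟩, b₃⟩ := p
  have hsum : (∀ i : Fin n, ((i : ℕ) = 0 ∨ (i : ℕ) = 1) →
      tensorWt wt₂ wt₃ (b₂, b₃) i = 0) ↔
      ((∀ i : Fin n, ((i : ℕ) = 0 ∨ (i : ℕ) = 1) → wt₂ b₂ i = 0) ∧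
       (∀ i : Fin n, ((i : ℕ) = 0 ∨ (i : ℕ) = 1) → wt₃ b₃ i = 0)) := by
    constructor
    · intro h
      refine ⟨fun i hi => ?_, fun i hi => ?_⟩ <;>
      · have := h i hi
        have h2 := hwt₂ b₂ i
        have h3 := hwt₃ b₃ i
        simp only [tensorWt] at this
        omega
    · rintro ⟨h2, h3⟩ i hi
      simp only [tensorWt, h2 i hi, h3 i hi, add_zero]
  simp only [tensorOddOp, hsum]
  by_cases C3 : ∀ i : Fin n, ((i : ℕ) = 0 ∨ (i : ℕ) = 1) → wt₃ b₃ i = 0 <;>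
    by_cases C2 : ∀ i : Fin n, ((i : ℕ) = 0 ∨ (i : ℕ) = 1) → wt₂ b₂ i = 0
  · rw [if_pos C3, if_pos C2, if_pos ⟨C2, C3⟩]
    simp [Option.map_map, Function.comp_def]
  · rw [if_pos C3, if_neg C2, if_neg (fun h => C2 h.1), if_pos C3]
    simp [Option.map_map, Function.comp_def]
  · rw [if_neg C3, if_neg (fun h => C3 h.2), if_neg C3]
    simp [Option.map_map, Function.comp_def]
  · rw [if_neg C3, if_neg (fun h => C3 h.2), if_neg C3]
    simp [Option.map_map, Function.comp_def]

/-- Associativity of the tensor product of abstract `q(n)`-crystals: the natural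
bijection `(B₁ ⊗ B₂) ⊗ B₃ → B₁ ⊗ (B₂ ⊗ B₃)` commutes with the odd operators
`ẽ₁̄` and `f̃₁̄` defined by the tensor product rule (weights are nonnegative). -/
theorem tensorOddOp_assoc (n : ℕ) (hn : 2 ≤ n)
    (B₁ B₂ B₃ : Type*)
    (wt₁ : B₁ → Fin n → ℤ) (wt₂ : B₂ → Fin n → ℤ) (wt₃ : B₃ → Fin n → ℤ)
    (hwt₁ : ∀ b i, 0 ≤ wt₁ b i) (hwt₂ : ∀ b i, 0 ≤ wt₂ b i) (hwt₃ : ∀ b i, 0 ≤ wt₃ b i)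
    (ebar₁ fbar₁ : B₁ → Option B₁) (ebar₂ fbar₂ : B₂ → Option B₂)
    (ebar₃ fbar₃ : B₃ → Option B₃) :
    ∀ p : (B₁ × B₂) × B₃,
      ((tensorOddOp wt₃ (tensorOddOp wt₂ ebar₁ ebar₂) ebar₃ p).map
          (fun r => (r.1.1, (r.1.2, r.2)))
        = tensorOddOp (tensorWt wt₂ wt₃) ebar₁ (tensorOddOp wt₃ ebar₂ ebar₃)
            (p.1.1, (p.1.2, p.2))) ∧
      ((tensorOddOp wt₃ (tensorOddOp wt₂ fbar₁ fbar₂) fbar₃ p).map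
          (fun r => (r.1.1, (r.1.2, r.2)))
        = tensorOddOp (tensorWt wt₂ wt₃) fbar₁ (tensorOddOp wt₃ fbar₂ fbar₃)
            (p.1.1, (p.1.2, p.2))) := by
  intro p
  exact ⟨tensorOddOp_assoc_aux wt₂ wt₃ hwt₂ hwt₃ ebar₁ ebar₂ ebar₃ p,
    tensorOddOp_assoc_aux wt₂ wt₃ hwt₂ hwt₃ fbar₁ fbar₂ fbar₃ p⟩
end

section
/- The tensor product rule for odd operators defines an abstract q(n)-crystal structure: if B₁ and B₂ are abstract q(n)-crystals, then B₁ × B₂ with wt(b₁,b₂) = wt(b₁)+wt(b₂) and with ẽ₁̄, f̃₁̄ defined by the case rule (act on the first factor if the first two coordinates of wt(b₂) are both zero, otherwise act on the second factor) satisfies the axioms: wt(ẽ₁̄(b₁⊗b₂)) = wt(b₁⊗b₂) + α₁ whenever ẽ₁̄(b₁⊗b₂) ≠ 0, and f̃₁̄(b₁⊗b₂) = b₁'⊗b₂' ⟺ ẽ₁̄(b₁'⊗b₂') = b₁⊗b₂. -/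
/-- The first simple root `α₁ = ε₁ − ε₂` (0-indexed coordinates). -/
def alphaOne (n : ℕ) : Fin n → ℤ := fun i =>
  if (i : ℕ) = 0 then 1 else if (i : ℕ) = 1 then -1 else 0

/-- The tensor product rule defines an abstract `q(n)`-crystal structure on `B₁ × B₂`:
the odd operators shift the weight by `±α₁` and are mutually inverse partial bijections. -/
theorem tensorOddOp_is_qCrystal (n : ℕ) (hn : 2 ≤ n)
    (B₁ B₂ : Type*)
    (wt₁ : B₁ → Fin n → ℤ) (wt₂ : B₂ → Fin n → ℤ)
    (hwt₁ : ∀ b i, 0 ≤ wt₁ b i) (hwt₂ : ∀ b i, 0 ≤ wt₂ b i)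
    (ebar₁ fbar₁ : B₁ → Option B₁) (ebar₂ fbar₂ : B₂ → Option B₂)
    (hwt_e₁ : ∀ b b', ebar₁ b = some b' → wt₁ b' = fun i => wt₁ b i + alphaOne n i)
    (hwt_f₁ : ∀ b b', fbar₁ b = some b' → wt₁ b' = fun i => wt₁ b i - alphaOne n i)
    (hwt_e₂ : ∀ b b', ebar₂ b = some b' → wt₂ b' = fun i => wt₂ b i + alphaOne n i)
    (hwt_f₂ : ∀ b b', fbar₂ b = some b' → wt₂ b' = fun i => wt₂ b i - alphaOne n i)
    (hinv₁ : ∀ b b', fbar₁ b = some b' ↔ ebar₁ b' = some b)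
    (hinv₂ : ∀ b b', fbar₂ b = some b' ↔ ebar₂ b' = some b) :
    (∀ p p' : B₁ × B₂, tensorOddOp wt₂ ebar₁ ebar₂ p = some p' →
      tensorWt wt₁ wt₂ p' = fun i => tensorWt wt₁ wt₂ p i + alphaOne n i) ∧
    (∀ p p' : B₁ × B₂, tensorOddOp wt₂ fbar₁ fbar₂ p = some p' →
      tensorWt wt₁ wt₂ p' = fun i => tensorWt wt₁ wt₂ p i - alphaOne n i) ∧
    (∀ p p' : B₁ × B₂, tensorOddOp wt₂ fbar₁ fbar₂ p = some p' ↔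
      tensorOddOp wt₂ ebar₁ ebar₂ p' = some p) := by
  have h0 : (0:ℕ) < n := by omega
  have h1 : (1:ℕ) < n := by omega
  -- after acting on the second factor, the vanishing condition fails
  have hCe : ∀ b b', ebar₂ b = some b' →
      ¬ (∀ i : Fin n, ((i:ℕ) = 0 ∨ (i:ℕ) = 1) → wt₂ b' i = 0) := by
    intro b b' h hc
    have hv := hc ⟨0, h0⟩ (Or.inl rfl)
    rw [hwt_e₂ b b' h] at hv
    simp [alphaOne] at hv
    have := hwt₂ b ⟨0, h0⟩
    omega
  have hCf : ∀ b b', fbar₂ b = some b' →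
      ¬ (∀ i : Fin n, ((i:ℕ) = 0 ∨ (i:ℕ) = 1) → wt₂ b' i = 0) := by
    intro b b' h hc
    have hv := hc ⟨1, h1⟩ (Or.inr rfl)
    rw [hwt_f₂ b b' h] at hv
    have h10 : ((⟨1, h1⟩ : Fin n) : ℕ) ≠ 0 := by simp
    simp [alphaOne] at hv
    have := hwt₂ b ⟨1, h1⟩
    omega
  refine ⟨?_, ?_, ?_⟩
  · intro p p' h
    unfold tensorOddOp at h
    split at h
    · rcases Option.map_eq_some_iff.mp h with ⟨b, hb, hb'⟩
      subst hb'
      funext i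
      simp only [tensorWt, hwt_e₁ _ _ hb]
      ring
    · rcases Option.map_eq_some_iff.mp h with ⟨b, hb, hb'⟩
      subst hb'
      funext i
      simp only [tensorWt, hwt_e₂ _ _ hb]
      ring
  · intro p p' h
    unfold tensorOddOp at h
    split at h
    · rcases Option.map_eq_some_iff.mp h with ⟨b, hb, hb'⟩
      subst hb'
      funext i
      simp only [tensorWt, hwt_f₁ _ _ hb]
      ring
    · rcases Option.map_eq_some_iff.mp h with ⟨b, hb, hb'⟩
      subst hb'
      funext i
      simp only [tensorWt, hwt_f₂ _ _ hb]
      ring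
  · intro p p'
    constructor
    · intro h
      unfold tensorOddOp at h ⊢
      split at h
      · rcases Option.map_eq_some_iff.mp h with ⟨b, hb, hb'⟩
        subst hb'
        rw [if_pos (by assumption)]
        simp [(hinv₁ _ _).mp hb]
      · rcases Option.map_eq_some_iff.mp h with ⟨b, hb, hb'⟩
        subst hb'
        rw [if_neg (hCf _ _ hb)]
        simp [(hinv₂ _ _).mp hb]
    · intro h
      unfold tensorOddOp at h ⊢
      split at h
      · rcases Option.map_eq_some_iff.mp h with ⟨b, hb, hb'⟩
        have h2 : p.2 = p'.2 := by rw [← hb']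
        rw [if_pos (h2 ▸ (by assumption))]
        have h1' : p.1 = b := by rw [← hb']
        rw [h2, h1'] at *
        simp [(hinv₁ _ _).mpr hb]
      · rcases Option.map_eq_some_iff.mp h with ⟨b, hb, hb'⟩
        have h2 : p.2 = b := by rw [← hb']
        have h1' : p.1 = p'.1 := by rw [← hb']
        rw [if_neg (h2 ▸ hCe _ _ hb)]
        rw [h2, h1'] at *
        simp [(hinv₂ _ _).mpr hb]
end
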